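/- arXiv:1003.2301 — 2 statements merged into one kernel-verified Lean document; each statement's English description precedes it below -/
import Mathlib

section
/- Let I and J be two-sided ideals of R. Then E(n,IJ) is contained in the commutator subgroup [E_I, E_J] (the subgroup generated by all commutators aba⁻¹b⁻¹ with a ∈ E_I, b ∈ E_J). In particular, E(n,I²) ⊆ E_I. -/
/- Common definitions: linear groups over an associative ring with identity,
transvections, elementary subgroups, congruence subgroups, and the
stability-theoretic properties of rings, following V. M. Petechuk,
"Stability of rings". Throughout, `GL(n,R)` is realized as the group of
units `(Matrix (Fin n) (Fin n) R)ˣ`. -/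

open Matrix

section Defs

variable (n : ℕ) (R : Type*) [Ring R]

/-- A transvection: an invertible matrix of the form `1 + r·e_{ij}` with `i ≠ j`. -/
def IsTransvection {n : ℕ} {R : Type*} [Ring R] (g : (Matrix (Fin n) (Fin n) R)ˣ) : Prop :=
  ∃ i j : Fin n, i ≠ j ∧ ∃ r : R, g.val = 1 + single i j r

/-- `E_X`: the subgroup of `GL(n,R)` generated by the transvections `t_{ij}(x)`, `x ∈ X`,
`i ≠ j`. -/
def Esub (X : Set R) : Subgroup (Matrix (Fin n) (Fin n) R)ˣ :=
  Subgroup.closure {g | ∃ i j : Fin n, i ≠ j ∧ ∃ x ∈ X, g.val = 1 + single i j x}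

/-- `E(n,R) = E_R`. -/
def En : Subgroup (Matrix (Fin n) (Fin n) R)ˣ := Esub n R Set.univ

/-- `E(n,I)`: the normal closure of `E_I` in `E(n,R)`. -/
def EnI {R : Type*} [Ring R] (I : TwoSidedIdeal R) : Subgroup (Matrix (Fin n) (Fin n) R)ˣ :=
  Subgroup.closure {g | ∃ h ∈ En n R, ∃ e ∈ Esub n R (I : Set R), g = h * e * h⁻¹}

/-- `Λ_I`: entrywise reduction `GL(n,R) → GL(n, R/I)`. -/
def lamI {R : Type*} [Ring R] (I : TwoSidedIdeal R) :
    (Matrix (Fin n) (Fin n) R)ˣ →* (Matrix (Fin n) (Fin n) I.ringCon.Quotient)ˣ :=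
  Units.map ((RingCon.mk' I.ringCon).mapMatrix.toMonoidHom)

/-- `C_I = ker Λ_I`: the principal congruence subgroup of level `I`. -/
def CIsub {R : Type*} [Ring R] (I : TwoSidedIdeal R) : Subgroup (Matrix (Fin n) (Fin n) R)ˣ :=
  (lamI n I).ker

/-- `C(n,I) = Λ_I⁻¹(ξGL(n,R/I))`. -/
def CnI {R : Type*} [Ring R] (I : TwoSidedIdeal R) : Subgroup (Matrix (Fin n) (Fin n) R)ˣ :=
  (Subgroup.center _).comap (lamI n I)

/-- `R` is a commutator ring: `[C(n,I), E(n,R)] = E(n,I) ⊴ GL(n,R)` for every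
two-sided ideal `I`. -/
def IsCommutatorRing : Prop :=
  ∀ I : TwoSidedIdeal R, ⁅CnI n I, En n R⁆ = EnI n I ∧ (EnI n I).Normal

/-- Iterated commutator subgroup `[H, K, K, …, K]` (`k` copies of `K`). -/
def iterCommutator {G : Type*} [Group G] (H K : Subgroup G) : ℕ → Subgroup G
  | 0 => H
  | m + 1 => ⁅iterCommutator H K m, K⁆

/-- `R` is weakly-commutator of length `k`:
`[C(n,I), E(n,R), …, E(n,R)] = E(n,I) ⊴ GL(n,R)` (`k` copies of `E(n,R)`)
simultaneously for every two-sided ideal `I`. -/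
def IsWeaklyCommutatorRing (k : ℕ) : Prop :=
  0 < k ∧ ∀ I : TwoSidedIdeal R,
    iterCommutator (CnI n I) (En n R) k = EnI n I ∧ (EnI n I).Normal

/-- `R` is a normal ring: every subgroup invariant under conjugation by `E(n,R)` is
squeezed between `E(n,I)` and `C(n,I)` for some two-sided ideal `I`. -/
def IsNormalRing : Prop :=
  ∀ G : Subgroup (Matrix (Fin n) (Fin n) R)ˣ,
    (∀ e ∈ En n R, ∀ g ∈ G, e * g * e⁻¹ ∈ G) →
    ∃ I : TwoSidedIdeal R, EnI n I ≤ G ∧ G ≤ CnI n I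

/-- `R` is partially normal: every subgroup invariant under conjugation by `E(n,R)`
containing no non-identity transvection is contained in the center of `GL(n,R)`. -/
def IsPartiallyNormalRing : Prop :=
  ∀ N : Subgroup (Matrix (Fin n) (Fin n) R)ˣ,
    (∀ e ∈ En n R, ∀ g ∈ N, e * g * e⁻¹ ∈ N) →
    (∀ g ∈ N, IsTransvection g → g = 1) →
    N ≤ Subgroup.center _

/-- `R` is stable: both commutator and normal. -/
def IsStableRing : Prop := IsCommutatorRing n R ∧ IsNormalRing n R

/-- The annihilator `Ann I = {r | rI = Ir = 0}` of a two-sided ideal, as a two-sided ideal. -/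
def annIdeal {R : Type*} [Ring R] (I : TwoSidedIdeal R) : TwoSidedIdeal R :=
  TwoSidedIdeal.mk' {r : R | ∀ a ∈ I, r * a = 0 ∧ a * r = 0}
    (fun a _ => ⟨zero_mul a, mul_zero a⟩)
    (fun {x y} hx hy a ha => by
      refine ⟨?_, ?_⟩
      · rw [add_mul, (hx a ha).1, (hy a ha).1, add_zero]
      · rw [mul_add, (hx a ha).2, (hy a ha).2, add_zero])
    (fun {x} hx a ha => by
      refine ⟨?_, ?_⟩
      · rw [neg_mul, (hx a ha).1, neg_zero]
      · rw [mul_neg, (hx a ha).2, neg_zero])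
    (fun {x y} hy a ha => by
      refine ⟨?_, ?_⟩
      · rw [mul_assoc, (hy a ha).1, mul_zero]
      · rw [← mul_assoc]
        exact (hy (a * x) (I.mul_mem_right a x ha)).2)
    (fun {x y} hx a ha => by
      refine ⟨?_, ?_⟩
      · rw [mul_assoc]
        exact (hx (y * a) (I.mul_mem_left y a ha)).1
      · rw [← mul_assoc, (hx a ha).2, zero_mul])

end Defs

/-!
Let `F(K)` (`transvectionConjClosure n K`) be the subgroup generated by the elements
`z_{ij}(a, c) = t_{ji}(c) t_{ij}(a) t_{ji}(-c)` (`transvectionConj`) with `a ∈ K`. Conjugating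
`z_{ij}(a, c)` by an elementary transvection gives a product of such elements and of
transvections of level `K`; the only delicate case, conjugation by `t_{ij}(s)`, needs a third
index and hence `n ≥ 3`. So `F(K)` is normalised by `E(n,R)` and contains `E(n,K)`.
On the other hand `z_{ij}(ab, c)` is an explicit commutator of an element of `E_I` with one of
`E_J`, and `x ↦ z_{ij}(x, c)` is additive, so `F(IJ) ⊆ [E_I, E_J]`. For `J = I` the commutator
subgroup lies in `E_I`.
-/

namespace ElementarySubgroup

open Subgroup
open scoped commutatorElement

variable {n : ℕ} {R : Type*} [Ring R]

def transvectionUnit {i j : Fin n} (hij : i ≠ j) (r : R) : (Matrix (Fin n) (Fin n) R)ˣ where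
  val := 1 + single i j r
  inv := 1 + single i j (-r)
  val_inv := by simp [mul_add, add_mul, hij.symm, add_assoc, ← single_add]
  inv_val := by simp [mul_add, add_mul, hij.symm, add_assoc, ← single_add]

@[simp] lemma transvectionUnit_val {i j : Fin n} (hij : i ≠ j) (r : R) :
    (transvectionUnit hij r).val = 1 + single i j r := rfl

@[simp] lemma transvectionUnit_inv {i j : Fin n} (hij : i ≠ j) (r : R) :
    (transvectionUnit hij r)⁻¹ = transvectionUnit hij (-r) := Units.ext rfl

@[simp] lemma transvectionUnit_zero {i j : Fin n} (hij : i ≠ j) :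
    transvectionUnit hij (0 : R) = 1 := Units.ext (by simp)

lemma transvectionUnit_mem_Esub {X : Set R} {i j : Fin n} (hij : i ≠ j) {x : R} (hx : x ∈ X) :
    transvectionUnit hij x ∈ Esub n R X :=
  subset_closure ⟨i, j, hij, x, hx, rfl⟩

def transvectionConj {i j : Fin n} (hij : i ≠ j) (a c : R) : (Matrix (Fin n) (Fin n) R)ˣ :=
  transvectionUnit hij.symm c * transvectionUnit hij a * (transvectionUnit hij.symm c)⁻¹

lemma transvectionConj_zero_right {i j : Fin n} (hij : i ≠ j) (a : R) :
    transvectionConj hij a 0 = transvectionUnit hij a := by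
  simp [transvectionConj]

lemma transvectionConj_zero {i j : Fin n} (hij : i ≠ j) (c : R) :
    transvectionConj hij 0 c = 1 := by
  simp only [transvectionConj, transvectionUnit_zero, mul_one, mul_inv_cancel]

lemma transvectionConj_add {i j : Fin n} (hij : i ≠ j) (x y c : R) :
    transvectionConj hij (x + y) c = transvectionConj hij x c * transvectionConj hij y c := by
  ext1
  simp [transvectionConj, mul_add, add_mul, mul_assoc, single_add, ← single_neg, hij, hij.symm]
  abel

lemma transvectionConj_neg {i j : Fin n} (hij : i ≠ j) (x c : R) :
    transvectionConj hij (-x) c = (transvectionConj hij x c)⁻¹ :=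
  eq_inv_of_mul_eq_one_left <| by
    rw [← transvectionConj_add, neg_add_cancel, transvectionConj_zero]

lemma conj_transvectionConj_of_disjoint {p q i j : Fin n} (hpq : p ≠ q) (hij : i ≠ j)
    (hpi : p ≠ i) (hpj : p ≠ j) (hqi : q ≠ i) (hqj : q ≠ j) (s a c : R) :
    transvectionUnit hpq s * transvectionConj hij a c * (transvectionUnit hpq s)⁻¹ =
      transvectionConj hij a c := by
  ext1
  simp [transvectionConj, mul_add, add_mul, mul_assoc, ← single_neg, hij, hpq.symm, hpi.symm,
    hpj.symm, hqi, hqj]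
  abel

lemma conj_transvectionConj_ji {i j : Fin n} (hij : i ≠ j) (s a c : R) :
    transvectionUnit hij.symm s * transvectionConj hij a c * (transvectionUnit hij.symm s)⁻¹ =
      transvectionConj hij a (s + c) := by
  ext1
  simp [transvectionConj, mul_add, add_mul, mul_assoc, single_add, ← single_neg, hij]
  abel

lemma conj_transvectionConj_pi {p i j : Fin n} (hij : i ≠ j) (hpi : p ≠ i) (hpj : p ≠ j)
    (s a c : R) :
    transvectionUnit hpi s * transvectionConj hij a c * (transvectionUnit hpi s)⁻¹ =
      transvectionUnit hpj (s * a) * transvectionUnit hpi (-(s * a * c)) *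
        transvectionConj hij a c := by
  ext1
  simp [transvectionConj, mul_add, add_mul, mul_assoc, ← single_neg, hij, hij.symm, hpi.symm,
    hpj.symm]
  abel

lemma conj_transvectionConj_pj {p i j : Fin n} (hij : i ≠ j) (hpi : p ≠ i) (hpj : p ≠ j)
    (s a c : R) :
    transvectionUnit hpj s * transvectionConj hij a c * (transvectionUnit hpj s)⁻¹ =
      transvectionConj hij a c * transvectionUnit hpj (s * c * a) *
        transvectionUnit hpi (-(s * c * a * c)) := by
  ext1
  simp [transvectionConj, mul_add, add_mul, mul_assoc, ← single_neg, hij, hij.symm, hpi.symm,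
    hpj.symm]
  abel

lemma conj_transvectionConj_iq {i j q : Fin n} (hij : i ≠ j) (hiq : i ≠ q) (hjq : j ≠ q)
    (s a c : R) :
    transvectionUnit hiq s * transvectionConj hij a c * (transvectionUnit hiq s)⁻¹ =
      transvectionConj hij a c * transvectionUnit hjq (c * a * c * s) *
        transvectionUnit hiq (a * c * s) := by
  ext1
  simp [transvectionConj, mul_add, add_mul, mul_assoc, ← single_neg, hij, hij.symm, hiq.symm,
    hjq.symm]
  abel

lemma conj_transvectionConj_jq {i j q : Fin n} (hij : i ≠ j) (hiq : i ≠ q) (hjq : j ≠ q)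
    (s a c : R) :
    transvectionUnit hjq s * transvectionConj hij a c * (transvectionUnit hjq s)⁻¹ =
      transvectionConj hij a c * transvectionUnit hjq (-(c * a * s)) *
        transvectionUnit hiq (-(a * s)) := by
  ext1
  simp [transvectionConj, mul_add, add_mul, mul_assoc, ← single_neg, hij, hij.symm, hiq.symm,
    hjq.symm]
  abel

/-- With a third index `h`, the conjugate is a commutator of column-`h` transvections with
row-`h` transvections whose entries lie in the ideal generated by `a`; the conjugates of the
latter by the former are computed in `conj_transvectionUnit_by_col_pair`. -/
lemma conj_transvectionConj_ij {i j h : Fin n} (hij : i ≠ j) (hih : i ≠ h) (hjh : j ≠ h)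
    (s a c : R) :
    transvectionUnit hij s * transvectionConj hij a c * (transvectionUnit hij s)⁻¹ =
      ⁅transvectionUnit hih (1 + s * c) * transvectionUnit hjh c,
        transvectionUnit hih.symm (-(a * c)) * transvectionUnit hjh.symm (a + a * c * s)⁆ := by
  ext1
  simp [commutatorElement_def, transvectionConj, mul_add, add_mul, mul_assoc, single_add,
    ← single_neg, hij, hij.symm, hih, hih.symm, hjh, hjh.symm]
  abel

lemma conj_transvectionUnit_by_col_pair {i j h : Fin n} (hij : i ≠ j) (hih : i ≠ h)
    (hjh : j ≠ h) (u v y : R) :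
    (transvectionUnit hih u * transvectionUnit hjh v) * transvectionUnit hih.symm y *
        (transvectionUnit hih u * transvectionUnit hjh v)⁻¹ =
      transvectionUnit hij.symm (v * y) * transvectionUnit hjh (-(v * y * u)) *
        transvectionConj hih.symm y u := by
  ext1
  simp [transvectionConj, mul_add, add_mul, mul_assoc, ← single_neg, hij, hih, hih.symm, hjh.symm]
  abel

lemma transvectionConj_mul_eq_commutator {i j h : Fin n} (hij : i ≠ j) (hih : i ≠ h)
    (hjh : j ≠ h) (a b c : R) :
    transvectionConj hij (a * b) c =
      ⁅transvectionUnit hjh (c * a) * transvectionUnit hih a,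
        transvectionUnit hjh.symm b * transvectionUnit hih.symm (-(b * c))⁆ := by
  ext1
  simp [commutatorElement_def, transvectionConj, mul_add, add_mul, mul_assoc, ← single_neg, hij,
    hij.symm, hih, hih.symm, hjh, hjh.symm]
  abel

lemma transvectionUnit_mul_comm_of_same_col {i j h : Fin n} (hih : i ≠ h) (hjh : j ≠ h)
    (u v : R) :
    transvectionUnit hih u * transvectionUnit hjh v =
      transvectionUnit hjh v * transvectionUnit hih u := by
  ext1
  simp [mul_add, add_mul, hih.symm, hjh.symm]
  abel

variable (n) in
def transvectionConjClosure (K : TwoSidedIdeal R) : Subgroup (Matrix (Fin n) (Fin n) R)ˣ :=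
  closure {g | ∃ (i j : Fin n) (hij : i ≠ j), ∃ a ∈ K, ∃ c : R,
    g = transvectionConj hij a c}

section transvectionConjClosure

variable {K : TwoSidedIdeal R}

lemma transvectionConj_mem_closure {i j : Fin n} (hij : i ≠ j) {a : R} (ha : a ∈ K) (c : R) :
    transvectionConj hij a c ∈ transvectionConjClosure n K :=
  subset_closure ⟨i, j, hij, a, ha, c, rfl⟩

lemma transvectionUnit_mem_closure {i j : Fin n} (hij : i ≠ j) {a : R} (ha : a ∈ K) :
    transvectionUnit hij a ∈ transvectionConjClosure n K :=
  transvectionConj_zero_right hij a ▸ transvectionConj_mem_closure hij ha 0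

lemma conj_transvectionUnit_by_col_pair_mem_closure {i j h : Fin n} (hij : i ≠ j) (hih : i ≠ h)
    (hjh : j ≠ h) (u v : R) {y : R} (hy : y ∈ K) :
    (transvectionUnit hih u * transvectionUnit hjh v) * transvectionUnit hih.symm y *
        (transvectionUnit hih u * transvectionUnit hjh v)⁻¹ ∈ transvectionConjClosure n K := by
  rw [conj_transvectionUnit_by_col_pair hij hih hjh]
  have hvy : v * y ∈ K := K.mul_mem_left v y hy
  exact mul_mem (mul_mem (transvectionUnit_mem_closure _ hvy)
    (transvectionUnit_mem_closure _ (neg_mem (K.mul_mem_right _ u hvy))))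
    (transvectionConj_mem_closure _ hy u)

lemma conj_transvectionConj_ij_mem_closure (hn : 3 ≤ n) {i j : Fin n} (hij : i ≠ j) (s : R)
    {a : R} (ha : a ∈ K) (c : R) :
    transvectionUnit hij s * transvectionConj hij a c * (transvectionUnit hij s)⁻¹ ∈
      transvectionConjClosure n K := by
  obtain ⟨h, hhi, hhj⟩ := Fin.exists_ne_and_ne_of_two_lt i j (by omega)
  have hx : -(a * c) ∈ K := neg_mem (K.mul_mem_right a c ha)
  have hy : a + a * c * s ∈ K := K.add_mem ha (K.mul_mem_right _ s (K.mul_mem_right a c ha))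
  rw [conj_transvectionConj_ij hij hhi.symm hhj.symm,
    show ∀ g x y : (Matrix (Fin n) (Fin n) R)ˣ,
      ⁅g, x * y⁆ = g * x * g⁻¹ * (g * y * g⁻¹) * y⁻¹ * x⁻¹ from
      fun _ _ _ => by group]
  refine mul_mem (mul_mem (mul_mem ?_ ?_) (inv_mem (transvectionUnit_mem_closure hhj hy)))
    (inv_mem (transvectionUnit_mem_closure hhi hx))
  · exact conj_transvectionUnit_by_col_pair_mem_closure hij _ _ _ _ hx
  · rw [transvectionUnit_mul_comm_of_same_col]
    exact conj_transvectionUnit_by_col_pair_mem_closure hij.symm _ _ _ _ hy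

lemma conj_transvectionConj_mem_closure (hn : 3 ≤ n) {p q : Fin n} (hpq : p ≠ q) (s : R)
    {i j : Fin n} (hij : i ≠ j) {a : R} (ha : a ∈ K) (c : R) :
    transvectionUnit hpq s * transvectionConj hij a c * (transvectionUnit hpq s)⁻¹ ∈
      transvectionConjClosure n K := by
  have hz := transvectionConj_mem_closure hij ha c
  obtain rfl | hqi := eq_or_ne q i
  · obtain rfl | hpj := eq_or_ne p j
    · rw [conj_transvectionConj_ji]
      exact transvectionConj_mem_closure hij ha _
    have hsa : s * a ∈ K := K.mul_mem_left s a ha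
    rw [conj_transvectionConj_pi hij hpq hpj]
    exact mul_mem (mul_mem (transvectionUnit_mem_closure _ hsa)
      (transvectionUnit_mem_closure _ (neg_mem (K.mul_mem_right _ c hsa)))) hz
  obtain rfl | hqj := eq_or_ne q j
  · obtain rfl | hpi := eq_or_ne p i
    · exact conj_transvectionConj_ij_mem_closure hn hij s ha c
    have hsca : s * c * a ∈ K := K.mul_mem_left _ a ha
    rw [conj_transvectionConj_pj hij hpi hpq]
    exact mul_mem (mul_mem hz (transvectionUnit_mem_closure _ hsca))
      (transvectionUnit_mem_closure _ (neg_mem (K.mul_mem_right _ c hsca)))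
  obtain rfl | hpi := eq_or_ne p i
  · have hac : a * c ∈ K := K.mul_mem_right a c ha
    rw [conj_transvectionConj_iq hij hpq hqj.symm]
    exact mul_mem (mul_mem hz (transvectionUnit_mem_closure _
      (K.mul_mem_right _ s (K.mul_mem_right _ c (K.mul_mem_left c a ha)))))
      (transvectionUnit_mem_closure _ (K.mul_mem_right _ s hac))
  obtain rfl | hpj := eq_or_ne p j
  · rw [conj_transvectionConj_jq hij hqi.symm hpq]
    exact mul_mem (mul_mem hz (transvectionUnit_mem_closure _
      (neg_mem (K.mul_mem_right _ s (K.mul_mem_left c a ha)))))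
      (transvectionUnit_mem_closure _ (neg_mem (K.mul_mem_right a s ha)))
  rw [conj_transvectionConj_of_disjoint hpq hij hpi hpj hqi hqj]
  exact hz

lemma conj_mem_transvectionConjClosure (hn : 3 ≤ n) {p q : Fin n} (hpq : p ≠ q) (s : R)
    {f : (Matrix (Fin n) (Fin n) R)ˣ} (hf : f ∈ transvectionConjClosure n K) :
    transvectionUnit hpq s * f * (transvectionUnit hpq s)⁻¹ ∈ transvectionConjClosure n K := by
  have hmap : (transvectionConjClosure n K).map (MulAut.conj (transvectionUnit hpq s)).toMonoidHom
      ≤ transvectionConjClosure n K := by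
    rw [transvectionConjClosure, MonoidHom.map_closure, closure_le]
    rintro _ ⟨_, ⟨i, j, hij, a, ha, c, rfl⟩, rfl⟩
    exact conj_transvectionConj_mem_closure hn hpq s hij ha c
  exact hmap ⟨f, hf, rfl⟩

lemma transvectionUnit_mem_normalizer_closure (hn : 3 ≤ n) {p q : Fin n} (hpq : p ≠ q) (s : R) :
    transvectionUnit hpq s ∈ normalizer (transvectionConjClosure n K : Set _) := by
  refine mem_normalizer_iff.mpr fun f =>
    ⟨conj_mem_transvectionConjClosure hn hpq s, fun hf => ?_⟩
  have h := conj_mem_transvectionConjClosure hn hpq (-s) hf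
  rwa [← transvectionUnit_inv, inv_inv, ← mul_assoc, ← mul_assoc, inv_mul_cancel, one_mul,
    mul_assoc, inv_mul_cancel, mul_one] at h

lemma En_le_normalizer_closure (hn : 3 ≤ n) :
    En n R ≤ normalizer (transvectionConjClosure n K : Set _) := by
  refine closure_le _ |>.mpr ?_
  rintro g ⟨p, q, hpq, s, -, hg⟩
  obtain rfl : g = transvectionUnit hpq s := Units.ext hg
  exact transvectionUnit_mem_normalizer_closure hn hpq s

lemma Esub_le_closure : Esub n R (K : Set R) ≤ transvectionConjClosure n K := by
  refine closure_le _ |>.mpr ?_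
  rintro g ⟨i, j, hij, a, ha, hg⟩
  obtain rfl : g = transvectionUnit hij a := Units.ext hg
  exact transvectionUnit_mem_closure hij ha

lemma EnI_le_closure (hn : 3 ≤ n) : EnI n K ≤ transvectionConjClosure n K := by
  refine closure_le _ |>.mpr ?_
  rintro _ ⟨h, hh, e, he, rfl⟩
  exact (En_le_normalizer_closure hn hh e).mp (Esub_le_closure he)

end transvectionConjClosure

lemma transvectionConj_mul_mem_commutator (hn : 3 ≤ n) {I J : TwoSidedIdeal R} {i j : Fin n}
    (hij : i ≠ j) {a b : R} (ha : a ∈ I) (hb : b ∈ J) (c : R) :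
    transvectionConj hij (a * b) c ∈ ⁅Esub n R (I : Set R), Esub n R (J : Set R)⁆ := by
  obtain ⟨h, hhi, hhj⟩ := Fin.exists_ne_and_ne_of_two_lt i j (by omega)
  rw [transvectionConj_mul_eq_commutator hij hhi.symm hhj.symm]
  exact commutator_mem_commutator
    (mul_mem (transvectionUnit_mem_Esub _ (I.mul_mem_left c a ha)) (transvectionUnit_mem_Esub _ ha))
    (mul_mem (transvectionUnit_mem_Esub _ hb)
      (transvectionUnit_mem_Esub _ (neg_mem (J.mul_mem_right b c hb))))

lemma transvectionConjClosure_span_mul_le_commutator (hn : 3 ≤ n) (I J : TwoSidedIdeal R) :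
    transvectionConjClosure n (TwoSidedIdeal.span {x : R | ∃ a ∈ I, ∃ b ∈ J, x = a * b}) ≤
      ⁅Esub n R (I : Set R), Esub n R (J : Set R)⁆ := by
  refine closure_le _ |>.mpr ?_
  rintro _ ⟨i, j, hij, x, hx, c, rfl⟩
  rw [TwoSidedIdeal.mem_span_iff_mem_addSubgroup_closure_absorbing ?left ?right] at hx
  case left =>
    rintro r _ ⟨a, ha, b, hb, rfl⟩
    exact ⟨r * a, I.mul_mem_left r a ha, b, hb, (mul_assoc r a b).symm⟩
  case right =>
    rintro _ r ⟨a, ha, b, hb, rfl⟩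
    exact ⟨a, ha, b * r, J.mul_mem_right b r hb, mul_assoc a b r⟩
  induction hx using AddSubgroup.closure_induction with
  | mem x hx =>
    obtain ⟨a, ha, b, hb, rfl⟩ := hx
    exact transvectionConj_mul_mem_commutator hn hij ha hb c
  | zero => rw [transvectionConj_zero]; exact one_mem _
  | add x y _ _ hx hy => rw [transvectionConj_add]; exact mul_mem hx hy
  | neg x _ hx => rw [transvectionConj_neg]; exact inv_mem hx

end ElementarySubgroup

/-- `E(n,IJ) ⊆ [E_I, E_J]`; in particular `E(n,I²) ⊆ E_I`. -/
theorem statement1 {R : Type*} [Ring R] {n : ℕ} (hn : 3 ≤ n) (I J : TwoSidedIdeal R) :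
    EnI n (TwoSidedIdeal.span {x : R | ∃ a ∈ I, ∃ b ∈ J, x = a * b}) ≤
      ⁅Esub n R (I : Set R), Esub n R (J : Set R)⁆ ∧
    EnI n (TwoSidedIdeal.span {x : R | ∃ a ∈ I, ∃ b ∈ I, x = a * b}) ≤
      Esub n R (I : Set R) := by
  have key (J : TwoSidedIdeal R) := (ElementarySubgroup.EnI_le_closure hn).trans
    (ElementarySubgroup.transvectionConjClosure_span_mul_le_commutator hn I J)
  exact ⟨key J, (key I).trans
    (Subgroup.le_normalizer_iff_commutator_le_right.mp Subgroup.le_normalizer)⟩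
end

section
/- Suppose R is weakly-commutator of some length k and every quotient ring R/I of R (I a two-sided ideal) is partially normal. Then R is stable. -/
/- Common definitions: linear groups over an associative ring with identity,
transvections, elementary subgroups, congruence subgroups, and the
stability-theoretic properties of rings, following V. M. Petechuk,
"Stability of rings". Throughout, `GL(n,R)` is realized as the group of
units `(Matrix (Fin n) (Fin n) R)ˣ`. -/

open Matrix

/-!
`E(n,R)` is perfect for `n ≥ 3`, so the three subgroups lemma in `GL(n,R) / E(n,I)` turns
`[[X, E], E] ≤ E(n,I)` into `[X, E] ≤ E(n,I)`; descending from the `k`-fold commutator gives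
`[C(n,I), E(n,R)] ≤ E(n,I)`, and `E(n,I) = [C(n,I), E, …, E] ≤ [C(n,I), E]` gives the converse.

For `G` normalized by `E(n,R)`, let `I` be the ideal of all `r` with every `t_{ij}(r) ∈ G`, so
`E(n,I) ≤ G`. The image of `G` in `GL(n,R/I)` is normalized by `E(n,R/I)` and contains no
nontrivial transvection, so partial normality of `R/I` makes it central: `G ≤ C(n,I)`.
-/

open scoped commutatorElement
open Subgroup

section GroupTheory

variable {G : Type*} [Group G]

theorem iterCommutator_le {H K : Subgroup G} (hH : K ≤ normalizer H) :
    ∀ m, iterCommutator H K m ≤ H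
  | 0 => le_rfl
  | m + 1 => (commutator_mono (iterCommutator_le hH m) le_rfl).trans
      (le_normalizer_iff_commutator_le_left.mp hH)

/-- The three subgroups lemma, applied in `G ⧸ N`. -/
theorem commutator_le_of_commutator_commutator_le {X K N : Subgroup G} [N.Normal]
    (hK : ⁅K, K⁆ = K) (h : ⁅⁅X, K⁆, K⁆ ≤ N) : ⁅X, K⁆ ≤ N := by
  set π := QuotientGroup.mk' N
  have hXKK : ⁅⁅X.map π, K.map π⁆, K.map π⁆ = ⊥ := by
    rwa [← map_commutator, ← map_commutator, Subgroup.map_eq_bot_iff, QuotientGroup.ker_mk']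
  have hKXK : ⁅⁅K.map π, X.map π⁆, K.map π⁆ = ⊥ := by
    rwa [commutator_comm (K.map π)]
  have hKKX := commutator_commutator_eq_bot_of_rotate hKXK hXKK
  rwa [← map_commutator, hK, commutator_comm, ← map_commutator, Subgroup.map_eq_bot_iff,
    QuotientGroup.ker_mk'] at hKKX

theorem commutator_le_of_iterCommutator_le {H K N : Subgroup G} [N.Normal]
    (hK : ⁅K, K⁆ = K) : ∀ m, iterCommutator H K (m + 1) ≤ N → ⁅H, K⁆ ≤ N
  | 0, h => h
  | m + 1, h => commutator_le_of_iterCommutator_le hK m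
      (commutator_le_of_commutator_commutator_le hK h)

/-- Commutation with `e` turns `t * c` into `⁅t, e⁆ * c'` with `c'` conjugate to `⁅c, e⁆`. -/
theorem exists_mul_mem_commutator {A K X : Subgroup G} {T : Set G} (hTK : T ⊆ K)
    (hT : ∀ t ∈ T, ∃ e ∈ K, ⁅t, e⁆ ∈ T) (hA : K ≤ normalizer A) {t c : G} (ht : t ∈ T)
    (hc : c ∈ X) (htc : t * c ∈ A) : ∃ t' ∈ T, ∃ c' ∈ ⁅X, K⁆, t' * c' ∈ A := by
  obtain ⟨e, he, hte⟩ := hT t ht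
  set w := ⁅t, e⁆⁻¹ * t
  have hw : w ∈ K := mul_mem (inv_mem (hTK hte)) (hTK ht)
  refine ⟨⁅t, e⁆, hte, w * ⁅c, e⁆ * w⁻¹,
    normalizer_commutator_ge_right X K hw _ |>.mp (commutator_mem_commutator hc he), ?_⟩
  have hcomm : ⁅t * c, e⁆ = ⁅t, e⁆ * (w * ⁅c, e⁆ * w⁻¹) := by
    simp only [w, commutatorElement_def]
    group
  rw [← hcomm]
  exact commutator_mem_commutator htc he |> le_normalizer_iff_commutator_le_left.mp hA

theorem exists_mul_mem_iterCommutator {A H K : Subgroup G} {T : Set G} (hTK : T ⊆ K)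
    (hT : ∀ t ∈ T, ∃ e ∈ K, ⁅t, e⁆ ∈ T) (hA : K ≤ normalizer A) {t c : G} (ht : t ∈ T)
    (hc : c ∈ H) (htc : t * c ∈ A) :
    ∀ m, ∃ t' ∈ T, ∃ c' ∈ iterCommutator H K m, t' * c' ∈ A
  | 0 => ⟨t, ht, c, hc, htc⟩
  | m + 1 => by
    obtain ⟨t', ht', c', hc', htc'⟩ := exists_mul_mem_iterCommutator hTK hT hA ht hc htc m
    exact exists_mul_mem_commutator hTK hT hA ht' hc' htc'

end GroupTheory

section Transvection

variable {n : ℕ} {R : Type*} [Ring R]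

theorem one_add_single_mul_one_add_single {i j : Fin n} (hij : i ≠ j) (r s : R) :
    (1 + single i j r) * (1 + single i j s) = 1 + single i j (r + s) := by
  rw [mul_add, add_mul, add_mul, single_mul_single_of_ne _ _ _ _ hij.symm, single_add]
  simp only [one_mul, mul_one, add_zero, add_assoc]

def transvectionUnit (i j : Fin n) (hij : i ≠ j) (r : R) : (Matrix (Fin n) (Fin n) R)ˣ where
  val := 1 + single i j r
  inv := 1 + single i j (-r)
  val_inv := by rw [one_add_single_mul_one_add_single hij, add_neg_cancel, single_zero, add_zero]
  inv_val := by rw [one_add_single_mul_one_add_single hij, neg_add_cancel, single_zero, add_zero]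

variable {i j : Fin n}

@[simp]
theorem transvectionUnit_val (hij : i ≠ j) (r : R) :
    (transvectionUnit i j hij r).val = 1 + single i j r := rfl

theorem transvectionUnit_add (hij : i ≠ j) (r s : R) :
    transvectionUnit i j hij (r + s) = transvectionUnit i j hij r * transvectionUnit i j hij s :=
  Units.ext (one_add_single_mul_one_add_single hij r s).symm

@[simp]
theorem transvectionUnit_zero (hij : i ≠ j) : transvectionUnit i j hij (0 : R) = 1 :=
  Units.ext (by simp)

theorem transvectionUnit_neg (hij : i ≠ j) (r : R) :
    transvectionUnit i j hij (-r) = (transvectionUnit i j hij r)⁻¹ :=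
  eq_inv_of_mul_eq_one_left (by rw [← transvectionUnit_add, neg_add_cancel, transvectionUnit_zero])

/-- The Steinberg commutator relation. -/
theorem commutatorElement_transvectionUnit {k : Fin n} (hij : i ≠ j) (hjk : j ≠ k) (hik : i ≠ k)
    (r s : R) :
    ⁅transvectionUnit i j hij r, transvectionUnit j k hjk s⁆ =
      transvectionUnit i k hik (r * s) := by
  have hswap : transvectionUnit i j hij r * transvectionUnit j k hjk s =
      transvectionUnit i k hik (r * s) *
        (transvectionUnit j k hjk s * transvectionUnit i j hij r) := by
    ext : 1
    simp only [Units.val_mul, transvectionUnit_val, mul_add, add_mul, one_mul, mul_one,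
      single_mul_single_same, single_mul_single_of_ne _ _ _ _ hik.symm,
      single_mul_single_of_ne _ _ _ _ hjk.symm, add_zero]
    abel
  rw [commutatorElement_def, hswap]
  group

theorem transvectionUnit_mem_Esub {X : Set R} (hij : i ≠ j) {r : R} (hr : r ∈ X) :
    transvectionUnit i j hij r ∈ Esub n R X :=
  subset_closure ⟨i, j, hij, r, hr, rfl⟩

theorem transvectionUnit_mem_En (hij : i ≠ j) (r : R) : transvectionUnit i j hij r ∈ En n R :=
  transvectionUnit_mem_Esub hij (Set.mem_univ r)

theorem lamI_transvectionUnit (I : TwoSidedIdeal R) (hij : i ≠ j) (r : R) :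
    lamI n I (transvectionUnit i j hij r) = transvectionUnit i j hij (I.ringCon.mk' r) := by
  ext : 1
  change (I.ringCon.mk').mapMatrix (1 + single i j r) = _
  rw [map_add, map_one, RingHom.mapMatrix_apply, map_single]
  rfl

theorem eq_lamI_transvectionUnit {I : TwoSidedIdeal R}
    {g : (Matrix (Fin n) (Fin n) I.ringCon.Quotient)ˣ}
    (hij : i ≠ j) {x : I.ringCon.Quotient} (hg : g.val = 1 + single i j x) :
    ∃ r : R, I.ringCon.mk' r = x ∧ g = lamI n I (transvectionUnit i j hij r) := by
  obtain ⟨r, rfl⟩ := I.ringCon.mk'_surjective x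
  exact ⟨r, rfl, by rw [lamI_transvectionUnit]; exact Units.ext hg⟩

end Transvection

section Elementary

variable {n : ℕ} {R : Type*} [Ring R]

theorem commutator_En_En (hn : 3 ≤ n) : ⁅En n R, En n R⁆ = En n R := by
  refine le_antisymm (commutator_le_self _) ((closure_le _).mpr ?_)
  rintro g ⟨i, j, hij, x, -, hg⟩
  obtain ⟨k, hki, hkj⟩ := Fin.exists_ne_and_ne_of_two_lt i j hn
  have hx := commutatorElement_transvectionUnit hki.symm hkj hij x 1
  rw [mul_one] at hx
  rw [SetLike.mem_coe, show g = transvectionUnit i j hij x from Units.ext hg, ← hx]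
  exact commutator_mem_commutator (transvectionUnit_mem_En _ x) (transvectionUnit_mem_En _ 1)

variable (n) in
def transvectionsWith (r : R) : Set (Matrix (Fin n) (Fin n) R)ˣ :=
  {g | ∃ (i j : Fin n) (hij : i ≠ j), transvectionUnit i j hij r = g}

theorem transvectionsWith_subset_En (r : R) : transvectionsWith n r ⊆ En n R := by
  rintro _ ⟨i, j, hij, rfl⟩
  exact transvectionUnit_mem_En hij r

theorem exists_commutatorElement_mem_transvectionsWith (hn : 3 ≤ n) {r : R} :
    ∀ t ∈ transvectionsWith n r, ∃ e ∈ En n R, ⁅t, e⁆ ∈ transvectionsWith n r := by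
  rintro _ ⟨i, j, hij, rfl⟩
  obtain ⟨k, hki, hkj⟩ := Fin.exists_ne_and_ne_of_two_lt i j hn
  refine ⟨transvectionUnit j k hkj.symm 1, transvectionUnit_mem_En _ 1, i, k, hki.symm, ?_⟩
  rw [commutatorElement_transvectionUnit, mul_one]

end Elementary

section Level

variable {n : ℕ} {R : Type*} [Ring R] {G : Subgroup (Matrix (Fin n) (Fin n) R)ˣ}
  {a b c : Fin n} {r : R}

theorem transvectionUnit_mem_of_mem_same_col (hG : En n R ≤ normalizer G) (hab : a ≠ b)
    (hcb : c ≠ b) (h : transvectionUnit a b hab r ∈ G) : transvectionUnit c b hcb r ∈ G := by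
  rcases eq_or_ne c a with rfl | hca
  · exact h
  · rw [← one_mul r, ← commutatorElement_transvectionUnit hca hab hcb]
    exact le_normalizer_iff_commutator_le_right.mp hG
      (commutator_mem_commutator (transvectionUnit_mem_En hca 1) h)

theorem transvectionUnit_mem_of_mem_same_row (hG : En n R ≤ normalizer G) (hab : a ≠ b)
    (hac : a ≠ c) (h : transvectionUnit a b hab r ∈ G) : transvectionUnit a c hac r ∈ G := by
  rcases eq_or_ne b c with rfl | hbc
  · exact h
  · rw [← mul_one r, ← commutatorElement_transvectionUnit hab hbc hac]
    exact le_normalizer_iff_commutator_le_left.mp hG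
      (commutator_mem_commutator h (transvectionUnit_mem_En hbc 1))

/-- Route `(a, b) → (a, c) → (a', c) → (a', b')` through an index `c ∉ {a, a'}`. -/
theorem transvectionUnit_mem_of_mem (hn : 3 ≤ n) (hG : En n R ≤ normalizer G) (hab : a ≠ b)
    (h : transvectionUnit a b hab r ∈ G) (a' b' : Fin n) (hab' : a' ≠ b') :
    transvectionUnit a' b' hab' r ∈ G := by
  obtain ⟨c, hca, hca'⟩ := Fin.exists_ne_and_ne_of_two_lt a a' hn
  have hac := transvectionUnit_mem_of_mem_same_row hG hab hca.symm h
  have ha'c := transvectionUnit_mem_of_mem_same_col hG hca.symm hca'.symm hac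
  exact transvectionUnit_mem_of_mem_same_row hG hca'.symm hab' ha'c

variable (G) in
/-- The level of `G`: the largest ideal `I` with `E_I ≤ G`. -/
def level (hn : 3 ≤ n) (hG : En n R ≤ normalizer G) : TwoSidedIdeal R :=
  TwoSidedIdeal.mk' {r | ∀ (i j : Fin n) (hij : i ≠ j), transvectionUnit i j hij r ∈ G}
    (fun i j hij => by rw [transvectionUnit_zero]; exact one_mem G)
    (fun hx hy i j hij => by
      rw [transvectionUnit_add]
      exact mul_mem (hx i j hij) (hy i j hij))
    (fun hx i j hij => by
      rw [transvectionUnit_neg]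
      exact inv_mem (hx i j hij))
    (fun {x y} hy i j hij => by
      obtain ⟨k, hki, hkj⟩ := Fin.exists_ne_and_ne_of_two_lt i j hn
      rw [← commutatorElement_transvectionUnit hki.symm hkj hij x y]
      exact le_normalizer_iff_commutator_le_right.mp hG
        (commutator_mem_commutator (transvectionUnit_mem_En _ x) (hy k j hkj)))
    (fun {x y} hx i j hij => by
      obtain ⟨k, hki, hkj⟩ := Fin.exists_ne_and_ne_of_two_lt i j hn
      rw [← commutatorElement_transvectionUnit hki.symm hkj hij x y]
      exact le_normalizer_iff_commutator_le_left.mp hG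
        (commutator_mem_commutator (hx i k hki.symm) (transvectionUnit_mem_En _ y)))

variable {hn : 3 ≤ n} {hG : En n R ≤ normalizer G}

theorem mem_level :
    r ∈ level G hn hG ↔ ∀ (i j : Fin n) (hij : i ≠ j), transvectionUnit i j hij r ∈ G :=
  TwoSidedIdeal.mem_mk' _ _ _ _ _ _ r

theorem mem_level_of_transvectionUnit_mem (hab : a ≠ b) (h : transvectionUnit a b hab r ∈ G) :
    r ∈ level G hn hG :=
  mem_level.mpr (transvectionUnit_mem_of_mem hn hG hab h)

theorem Esub_level_le : Esub n R (level G hn hG) ≤ G := by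
  refine (closure_le _).mpr ?_
  rintro g ⟨i, j, hij, x, hx, hg⟩
  rw [SetLike.mem_coe, show g = transvectionUnit i j hij x from Units.ext hg]
  exact mem_level.mp hx i j hij

end Level

section Normal

variable {n : ℕ} {R : Type*} [Ring R] {G : Subgroup (Matrix (Fin n) (Fin n) R)ˣ}

theorem EnI_le_of_Esub_le (hG : En n R ≤ normalizer G) {I : TwoSidedIdeal R}
    (h : Esub n R I ≤ G) : EnI n I ≤ G := by
  refine (closure_le _).mpr ?_
  rintro _ ⟨e, he, g, hg, rfl⟩
  exact le_normalizer_iff.mp hG e he g (h hg)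

theorem En_le_map_lamI (I : TwoSidedIdeal R) :
    En n I.ringCon.Quotient ≤ (En n R).map (lamI n I) := by
  refine (closure_le _).mpr ?_
  rintro g ⟨i, j, hij, x, -, hg⟩
  obtain ⟨r, -, rfl⟩ := eq_lamI_transvectionUnit hij hg
  exact mem_map_of_mem _ (transvectionUnit_mem_En hij r)

theorem En_le_normalizer_map_lamI (hG : En n R ≤ normalizer G) (I : TwoSidedIdeal R) :
    En n I.ringCon.Quotient ≤ normalizer (G.map (lamI n I)) :=
  (En_le_map_lamI I).trans ((map_mono hG).trans (le_normalizer_map _))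

/-- A transvection `t_{ij}(r)` modulo the level `I` lifts to `t_{ij}(r) c ∈ G` with `c ∈ C(n,I)`;
commuting `k` times with elementary matrices pushes `c` into `E(n,I) ≤ G`, leaving a
transvection with parameter `r` in `G`, so `r ∈ I`. -/
theorem eq_one_of_isTransvection_of_mem_map (hn : 3 ≤ n) (hG : En n R ≤ normalizer G) {k : ℕ}
    (hk : iterCommutator (CnI n (level G hn hG)) (En n R) k ≤ G)
    {g : (Matrix (Fin n) (Fin n) (level G hn hG).ringCon.Quotient)ˣ}
    (hg : g ∈ G.map (lamI n (level G hn hG))) (htv : IsTransvection g) : g = 1 := by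
  set I := level G hn hG
  obtain ⟨g₀, hg₀, rfl⟩ := hg
  obtain ⟨i, j, hij, x, hx⟩ := htv
  obtain ⟨r, rfl, hr⟩ := eq_lamI_transvectionUnit hij hx
  have hc : (transvectionUnit i j hij r)⁻¹ * g₀ ∈ CnI n I := by
    change lamI n _ _ ∈ center _
    rw [map_mul, map_inv, hr, inv_mul_cancel]
    exact one_mem _
  obtain ⟨_, ⟨a, b, hab, rfl⟩, c, hc', htc⟩ :=
    exists_mul_mem_iterCommutator (transvectionsWith_subset_En r)
      (exists_commutatorElement_mem_transvectionsWith hn) hG ⟨i, j, hij, rfl⟩ hc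
      (by rwa [mul_inv_cancel_left]) k
  have hrI : r ∈ I :=
    mem_level_of_transvectionUnit_mem hab ((mul_mem_cancel_right (hk hc')).mp htc)
  rw [hr, lamI_transvectionUnit, show I.ringCon.mk' r = 0 from (RingCon.eq _).mpr hrI,
    transvectionUnit_zero]

end Normal

section Stability

variable {n : ℕ} {R : Type*} [Ring R]

instance CnI.normal (I : TwoSidedIdeal R) : (CnI n I).Normal :=
  Normal.comap inferInstance _

theorem commutator_CnI_En_eq (hn : 3 ≤ n) {I : TwoSidedIdeal R} [(EnI n I).Normal] {k : ℕ}
    (hk : 0 < k) (h : iterCommutator (CnI n I) (En n R) k = EnI n I) :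
    ⁅CnI n I, En n R⁆ = EnI n I := by
  obtain ⟨m, rfl⟩ : ∃ m, k = m + 1 := Nat.exists_eq_succ_of_ne_zero hk.ne'
  refine le_antisymm (commutator_le_of_iterCommutator_le (commutator_En_En hn) m h.le) ?_
  rw [← h]
  exact commutator_mono (iterCommutator_le le_normalizer_of_normal m) le_rfl

theorem exists_EnI_le_le_CnI (hn : 3 ≤ n) {k : ℕ}
    (hiter : ∀ I : TwoSidedIdeal R, iterCommutator (CnI n I) (En n R) k = EnI n I)
    (hpn : ∀ I : TwoSidedIdeal R, IsPartiallyNormalRing n I.ringCon.Quotient)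
    {G : Subgroup (Matrix (Fin n) (Fin n) R)ˣ} (hG : En n R ≤ normalizer G) :
    ∃ I : TwoSidedIdeal R, EnI n I ≤ G ∧ G ≤ CnI n I := by
  have hEnI : EnI n (level G hn hG) ≤ G := EnI_le_of_Esub_le hG Esub_level_le
  refine ⟨level G hn hG, hEnI, fun g hg => ?_⟩
  have hcentral := hpn _ _ (le_normalizer_iff.mp (En_le_normalizer_map_lamI hG _))
    fun _ hg' => eq_one_of_isTransvection_of_mem_map hn hG ((hiter _).trans_le hEnI) hg'
  exact hcentral (mem_map_of_mem _ hg)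

end Stability

/-- a weakly-commutator ring all of whose quotient rings are
partially normal is stable. -/
theorem statement2 {R : Type*} [Ring R] {n : ℕ} (hn : 3 ≤ n) (k : ℕ)
    (hwc : IsWeaklyCommutatorRing n R k)
    (hpn : ∀ I : TwoSidedIdeal R, IsPartiallyNormalRing n I.ringCon.Quotient) :
    IsStableRing n R := by
  obtain ⟨hk, hI⟩ := hwc
  refine ⟨fun I => ?_, fun G hG =>
    exists_EnI_le_le_CnI hn (fun I => (hI I).1) hpn (le_normalizer_iff.mpr hG)⟩
  obtain ⟨hiter, hnormal⟩ := hI I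
  exact ⟨commutator_CnI_En_eq hn hk hiter, hnormal⟩
end
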